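/- (Tensor product physical value) Let G₁ and G₂ be weighted quantum retrieval games with finite nonempty answer sets and positive definite reduced density matrices, and suppose Phys(G₁) = Sel(G₁) and Phys(G₂) = Sel(G₂). Then Phys(G₁⊗G₂) = Sel(G₁⊗G₂), where G₁⊗G₂ = (ϱ₁⊗ϱ₂, σ₁⊗σ₂) is the tensor product game with (ϱ₁⊗ϱ₂)(s₁,s₂) = ϱ₁(s₁) ⊗ ϱ₂(s₂) and (σ₁⊗σ₂)((s₁,s₂),(a₁,a₂)) = σ₁(s₁,a₁)·σ₂(s₂,a₂). -/

import Mathlib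

/-!
`Sel(G)` is the least `c ≥ 0` with `∑ₛ σ(s,a) ϱ(s) ≤ c ρ` in the Loewner order for every
answer `a`: testing this inequality against a vector `x` is evaluating the selective
projection that puts `x xᴴ` on the answer `a` alone. Such operator inequalities can be
tensored, so `Sel(G₁⊗G₂) ≤ Sel(G₁) Sel(G₂)`. Conversely the value is multiplicative on
product projections, and products of physical projections are physical, so
`Phys(G₁) Phys(G₂) ≤ Phys(G₁⊗G₂)`. With `Phys ≤ Sel` and the hypotheses this gives
`Sel(G₁⊗G₂) ≤ Phys(G₁⊗G₂) ≤ Sel(G₁⊗G₂)`.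
-/

open Matrix Kronecker
open scoped ComplexOrder
open scoped ComplexOrder

namespace QRG

variable {n S A : Type*}

/-- The normalization `∑_{s,a} Tr[P(a)ϱ(s)]` of the distribution induced by an
indexed ensemble `ϱ` and a selective projection `P`. -/
noncomputable def normZ [Fintype n] [Fintype S] [Fintype A]
    (ϱ : S → Matrix n n ℂ) (P : A → Matrix n n ℂ) : ℝ :=
  ∑ s, ∑ a, (Matrix.trace (P a * ϱ s)).re

/-- The induced probability distribution `⟨ϱ, P⟩(s,a) = Tr[P(a)ϱ(s)] / normZ`. -/
noncomputable def induced [Fintype n] [Fintype S] [Fintype A]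
    (ϱ : S → Matrix n n ℂ) (P : A → Matrix n n ℂ) (s : S) (a : A) : ℝ :=
  (Matrix.trace (P a * ϱ s)).re / normZ ϱ P

/-- The value `Val(G,P) = ∑_{s,a} p(s,a)·σ(s,a)` of the game `G = (ϱ,σ)` with
respect to the projection `P`. -/
noncomputable def val [Fintype n] [Fintype S] [Fintype A]
    (ϱ : S → Matrix n n ℂ) (σ : S → A → ℝ) (P : A → Matrix n n ℂ) : ℝ :=
  ∑ s, ∑ a, induced ϱ P s a * σ s a

/-- The selective value `Sel(G)`: the supremum of `Val(G,P)` over all selective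
projections `P` (families of positive semidefinite matrices) with positive
normalization. -/
noncomputable def sel [Fintype n] [Fintype S] [Fintype A]
    (ϱ : S → Matrix n n ℂ) (σ : S → A → ℝ) : ℝ :=
  sSup {v | ∃ P : A → Matrix n n ℂ,
    (∀ a, (P a).PosSemidef) ∧ 0 < normZ ϱ P ∧ v = val ϱ σ P}

/-- The physical value `Phys(G)`: the supremum of `Val(G,P)` over all physical
projections `P` (selective projections with `∑_a P(a) = 1`). -/
noncomputable def phys [Fintype n] [DecidableEq n] [Fintype S] [Fintype A]
    (ϱ : S → Matrix n n ℂ) (σ : S → A → ℝ) : ℝ :=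
  sSup {v | ∃ P : A → Matrix n n ℂ,
    (∀ a, (P a).PosSemidef) ∧ (∑ a, P a) = 1 ∧ v = val ϱ σ P}

end QRG

open QRG

open scoped MatrixOrder

namespace Matrix

variable {n m : Type*}

lemma sum_kronecker_sum {α ι κ : Type*} [CommSemiring α] [Fintype ι] [Fintype κ]
    (A : ι → Matrix n n α) (B : κ → Matrix m m α) :
    (∑ i, A i) ⊗ₖ (∑ j, B j) = ∑ p : ι × κ, A p.1 ⊗ₖ B p.2 := by
  ext
  simp [kroneckerMap_apply, sum_apply, Fintype.sum_prod_type, Finset.sum_mul_sum]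

lemma sum_smul_kronecker_sum_smul {ι κ : Type*} [Fintype ι] [Fintype κ]
    (A : ι → Matrix n n ℂ) (B : κ → Matrix m m ℂ) (c : ι → ℝ) (d : κ → ℝ) :
    ∑ p : ι × κ, (c p.1 * d p.2) • (A p.1 ⊗ₖ B p.2) = (∑ i, c i • A i) ⊗ₖ ∑ j, d j • B j := by
  simp only [sum_kronecker_sum, smul_kronecker, kronecker_smul, smul_smul, mul_comm]

variable [Fintype n] [Fintype m]

lemma PosSemidef.trace_mul_nonneg {A B : Matrix n n ℂ} (hA : A.PosSemidef)
    (hB : B.PosSemidef) : 0 ≤ (A * B).trace := by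
  classical
  obtain ⟨C, rfl⟩ := CStarAlgebra.nonneg_iff_eq_star_mul_self.mp hB.nonneg
  rw [star_eq_conjTranspose, ← Matrix.mul_assoc, trace_mul_comm, ← Matrix.mul_assoc]
  exact (hA.mul_mul_conjTranspose_same C).trace_nonneg

lemma PosSemidef.re_trace_mul_le_re_trace_mul {P X Y : Matrix n n ℂ} (hP : P.PosSemidef)
    (h : X ≤ Y) : (P * X).trace.re ≤ (P * Y).trace.re := by
  have := (Complex.nonneg_iff.mp (hP.trace_mul_nonneg (le_iff.mp h))).1
  rw [Matrix.mul_sub, trace_sub, Complex.sub_re] at this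
  linarith

lemma kronecker_le_kronecker {X₁ Y₁ : Matrix n n ℂ} {X₂ Y₂ : Matrix m m ℂ}
    (hX₁ : 0 ≤ X₁) (h₁ : X₁ ≤ Y₁) (hX₂ : 0 ≤ X₂) (h₂ : X₂ ≤ Y₂) :
    X₁ ⊗ₖ X₂ ≤ Y₁ ⊗ₖ Y₂ := by
  have hleft : X₁ ⊗ₖ X₂ ≤ X₁ ⊗ₖ Y₂ := by
    rw [le_iff, ← eq_sub_of_add_eq (by rw [← kronecker_add, sub_add_cancel])]
    exact hX₁.posSemidef.kronecker (le_iff.mp h₂)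
  have hright : X₁ ⊗ₖ Y₂ ≤ Y₁ ⊗ₖ Y₂ := by
    rw [le_iff, ← eq_sub_of_add_eq (by rw [← add_kronecker, sub_add_cancel])]
    exact (le_iff.mp h₁).kronecker (hX₂.trans h₂).posSemidef
  exact hleft.trans hright

lemma re_trace_kronecker_mul {A₁ B₁ : Matrix n n ℂ} (hA₁ : A₁.PosSemidef)
    (hB₁ : B₁.PosSemidef) (A₂ B₂ : Matrix m m ℂ) :
    ((A₁ ⊗ₖ A₂) * (B₁ ⊗ₖ B₂)).trace.re = (A₁ * B₁).trace.re * (A₂ * B₂).trace.re := by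
  rw [← mul_kronecker_mul, trace_kronecker,
    Complex.eq_re_of_ofReal_le (hA₁.trace_mul_nonneg hB₁), Complex.re_ofReal_mul,
    Complex.ofReal_re]

lemma trace_vecMulVec_star_mul (x : n → ℂ) (M : Matrix n n ℂ) :
    (vecMulVec x (star x) * M).trace = star x ⬝ᵥ M *ᵥ x := by
  rw [vecMulVec_mul, trace_vecMulVec, dotProduct_comm, dotProduct_mulVec]

lemma posSemidef_of_forall_re_trace_vecMulVec_mul_nonneg {M : Matrix n n ℂ}
    (hM : M.IsHermitian) (h : ∀ x, 0 ≤ (vecMulVec x (star x) * M).trace.re) :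
    M.PosSemidef :=
  .of_dotProduct_mulVec_nonneg hM fun x => Complex.nonneg_iff.mpr
    ⟨trace_vecMulVec_star_mul x M ▸ h x, (hM.im_star_dotProduct_mulVec_self x).symm⟩

end Matrix

lemma Real.sSup_mul_sSup_le {s t : Set ℝ} {c : ℝ} (hs : ∀ x ∈ s, 0 ≤ x) (ht : ∀ y ∈ t, 0 ≤ y)
    (hc : 0 ≤ c) (h : ∀ x ∈ s, ∀ y ∈ t, x * y ≤ c) : sSup s * sSup t ≤ c := by
  rw [mul_comm, ← smul_eq_mul, ← Real.sSup_smul_of_nonneg (Real.sSup_nonneg ht)]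
  refine Real.sSup_le ?_ hc
  rintro _ ⟨x, hx, rfl⟩
  dsimp only
  rw [smul_eq_mul, mul_comm, ← smul_eq_mul, ← Real.sSup_smul_of_nonneg (hs x hx)]
  refine Real.sSup_le ?_ hc
  rintro _ ⟨y, hy, rfl⟩
  exact h x hx y hy

namespace QRG

variable {n S A : Type*} [Fintype n] [Fintype S] [Fintype A]
  {ϱ : S → Matrix n n ℂ} {σ : S → A → ℝ} {P : A → Matrix n n ℂ}

def score (ϱ : S → Matrix n n ℂ) (σ : S → A → ℝ) (P : A → Matrix n n ℂ) : ℝ :=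
  ∑ s, ∑ a, (P a * ϱ s).trace.re * σ s a

lemma val_eq_score_div : val ϱ σ P = score ϱ σ P / normZ ϱ P := by
  simp only [val, induced, score, Finset.sum_div, div_mul_eq_mul_div]

lemma normZ_eq_sum_re_trace (ϱ : S → Matrix n n ℂ) (P : A → Matrix n n ℂ) :
    normZ ϱ P = ∑ a, (P a * ∑ s, ϱ s).trace.re := by
  simp only [normZ, Matrix.mul_sum, trace_sum, Complex.re_sum]
  exact Finset.sum_comm

lemma score_eq_sum_re_trace (ϱ : S → Matrix n n ℂ) (σ : S → A → ℝ) (P : A → Matrix n n ℂ) :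
    score ϱ σ P = ∑ a, (P a * ∑ s, σ s a • ϱ s).trace.re := by
  simp only [score, Matrix.mul_sum, Matrix.mul_smul, trace_sum, trace_smul, Complex.re_sum,
    Complex.smul_re, smul_eq_mul, mul_comm (σ _ _)]
  exact Finset.sum_comm

lemma normZ_nonneg (hϱ : ∀ s, (ϱ s).PosSemidef) (hP : ∀ a, (P a).PosSemidef) :
    0 ≤ normZ ϱ P :=
  Finset.sum_nonneg fun s _ => Finset.sum_nonneg fun a _ =>
    (Complex.nonneg_iff.mp ((hP a).trace_mul_nonneg (hϱ s))).1

lemma sel_le_of_forall_sum_smul_le {c : ℝ} (hc : 0 ≤ c)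
    (h : ∀ a, ∑ s, σ s a • ϱ s ≤ c • ∑ s, ϱ s) : sel ϱ σ ≤ c := by
  refine Real.sSup_le ?_ hc
  rintro _ ⟨P, hP, hZ, rfl⟩
  rw [val_eq_score_div, div_le_iff₀ hZ, score_eq_sum_re_trace, normZ_eq_sum_re_trace,
    Finset.mul_sum]
  refine Finset.sum_le_sum fun a _ => ((hP a).re_trace_mul_le_re_trace_mul (h a)).trans_eq ?_
  rw [Matrix.mul_smul, trace_smul, Complex.smul_re, smul_eq_mul]

section

variable (hσ : ∀ s a, 0 ≤ σ s a) (hϱ : ∀ s, (ϱ s).PosSemidef)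
include hσ hϱ

lemma score_nonneg (hP : ∀ a, (P a).PosSemidef) : 0 ≤ score ϱ σ P :=
  Finset.sum_nonneg fun s _ => Finset.sum_nonneg fun a _ =>
    mul_nonneg (Complex.nonneg_iff.mp ((hP a).trace_mul_nonneg (hϱ s))).1 (hσ s a)

lemma score_le_sum_mul_normZ (hP : ∀ a, (P a).PosSemidef) :
    score ϱ σ P ≤ (∑ s, ∑ a, σ s a) * normZ ϱ P := by
  have hσ_le (s : S) (a : A) : σ s a ≤ ∑ s, ∑ a, σ s a :=
    (Finset.single_le_sum (fun a _ => hσ s a) (Finset.mem_univ a)).trans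
      (Finset.single_le_sum (f := fun s => ∑ a, σ s a)
        (fun s _ => Finset.sum_nonneg fun a _ => hσ s a) (Finset.mem_univ s))
  rw [normZ, Finset.mul_sum]
  refine Finset.sum_le_sum fun s _ => ?_
  rw [Finset.mul_sum]
  refine Finset.sum_le_sum fun a _ => ?_
  rw [mul_comm _ (P a * ϱ s).trace.re]
  exact mul_le_mul_of_nonneg_left (hσ_le s a)
    (Complex.nonneg_iff.mp ((hP a).trace_mul_nonneg (hϱ s))).1

lemma val_nonneg (hP : ∀ a, (P a).PosSemidef) : 0 ≤ val ϱ σ P := by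
  rw [val_eq_score_div]
  exact div_nonneg (score_nonneg hσ hϱ hP) (normZ_nonneg hϱ hP)

lemma val_le_sum (hP : ∀ a, (P a).PosSemidef) : val ϱ σ P ≤ ∑ s, ∑ a, σ s a := by
  rw [val_eq_score_div]
  exact div_le_of_le_mul₀ (normZ_nonneg hϱ hP)
    (Finset.sum_nonneg fun s _ => Finset.sum_nonneg fun a _ => hσ s a)
    (score_le_sum_mul_normZ hσ hϱ hP)

lemma bddAbove_val_setOf (Q : (A → Matrix n n ℂ) → Prop) :
    BddAbove {v | ∃ P : A → Matrix n n ℂ, (∀ a, (P a).PosSemidef) ∧ Q P ∧ v = val ϱ σ P} :=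
  ⟨∑ s, ∑ a, σ s a, by rintro _ ⟨P, hP, -, rfl⟩; exact val_le_sum hσ hϱ hP⟩

lemma sel_nonneg : 0 ≤ sel ϱ σ :=
  Real.sSup_nonneg (by rintro _ ⟨P, hP, -, rfl⟩; exact val_nonneg hσ hϱ hP)

lemma phys_nonneg [DecidableEq n] : 0 ≤ phys ϱ σ :=
  Real.sSup_nonneg (by rintro _ ⟨P, hP, -, rfl⟩; exact val_nonneg hσ hϱ hP)

lemma val_le_sel (hP : ∀ a, (P a).PosSemidef) : val ϱ σ P ≤ sel ϱ σ := by
  rcases (normZ_nonneg hϱ hP).eq_or_lt with hZ | hZ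
  · rw [val_eq_score_div, ← hZ, div_zero]
    exact sel_nonneg hσ hϱ
  · exact le_csSup (bddAbove_val_setOf hσ hϱ _) ⟨P, hP, hZ, rfl⟩

lemma val_le_phys [DecidableEq n] (hP : ∀ a, (P a).PosSemidef) (hP_sum : ∑ a, P a = 1) :
    val ϱ σ P ≤ phys ϱ σ :=
  le_csSup (bddAbove_val_setOf hσ hϱ _) ⟨P, hP, hP_sum, rfl⟩

lemma phys_le_sel [DecidableEq n] : phys ϱ σ ≤ sel ϱ σ :=
  Real.sSup_le (by rintro _ ⟨P, hP, -, rfl⟩; exact val_le_sel hσ hϱ hP) (sel_nonneg hσ hϱ)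

lemma score_le_sel_mul_normZ (hP : ∀ a, (P a).PosSemidef) :
    score ϱ σ P ≤ sel ϱ σ * normZ ϱ P := by
  rcases (normZ_nonneg hϱ hP).eq_or_lt with hZ | hZ
  · simpa [← hZ] using score_le_sum_mul_normZ hσ hϱ hP
  · rw [← div_le_iff₀ hZ, ← val_eq_score_div]
    exact val_le_sel hσ hϱ hP

lemma sum_smul_le_sel_smul (a : A) : ∑ s, σ s a • ϱ s ≤ sel ϱ σ • ∑ s, ϱ s := by
  classical
  have hρ : (∑ s, ϱ s).PosSemidef := posSemidef_sum _ fun s _ => hϱ s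
  have hM : (∑ s, σ s a • ϱ s).PosSemidef :=
    posSemidef_sum _ fun s _ => (hϱ s).smul (hσ s a)
  refine posSemidef_of_forall_re_trace_vecMulVec_mul_nonneg
    ((hρ.smul (sel_nonneg hσ hϱ)).isHermitian.sub hM.isHermitian) fun x => ?_
  set P : A → Matrix n n ℂ := Pi.single a (vecMulVec x (star x))
  have hP (a' : A) : (P a').PosSemidef := by
    rcases eq_or_ne a' a with rfl | h
    · simpa [P] using posSemidef_vecMulVec_self_star x
    · simpa [P, h] using PosSemidef.zero
  have key := score_le_sel_mul_normZ hσ hϱ hP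
  rw [score_eq_sum_re_trace, normZ_eq_sum_re_trace,
    Fintype.sum_eq_single a fun _ h => by simp [P, h],
    Fintype.sum_eq_single a fun _ h => by simp [P, h]] at key
  simp only [P, Pi.single_eq_same] at key
  rw [Matrix.mul_sub, trace_sub, Complex.sub_re, Matrix.mul_smul, trace_smul, Complex.smul_re,
    smul_eq_mul]
  linarith

end

section Kronecker

variable {n₁ n₂ S₁ S₂ A₁ A₂ : Type*} [Fintype n₁] [Fintype n₂] [Fintype S₁] [Fintype S₂]
  [Fintype A₁] [Fintype A₂] {ϱ₁ : S₁ → Matrix n₁ n₁ ℂ} {ϱ₂ : S₂ → Matrix n₂ n₂ ℂ}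
  {σ₁ : S₁ → A₁ → ℝ} {σ₂ : S₂ → A₂ → ℝ}

lemma sum_sum_mul_sum_sum {α : Type*} [CommSemiring α] (f : S₁ → A₁ → α) (g : S₂ → A₂ → α) :
    ∑ s : S₁ × S₂, ∑ a : A₁ × A₂, f s.1 a.1 * g s.2 a.2 =
      (∑ s, ∑ a, f s a) * ∑ s, ∑ a, g s a := by
  simp only [Fintype.sum_prod_type, Finset.sum_mul_sum]

lemma normZ_kronecker (hϱ₁ : ∀ s, (ϱ₁ s).PosSemidef) {P₁ : A₁ → Matrix n₁ n₁ ℂ}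
    (hP₁ : ∀ a, (P₁ a).PosSemidef) (P₂ : A₂ → Matrix n₂ n₂ ℂ) :
    normZ (fun s : S₁ × S₂ => ϱ₁ s.1 ⊗ₖ ϱ₂ s.2) (fun a : A₁ × A₂ => P₁ a.1 ⊗ₖ P₂ a.2) =
      normZ ϱ₁ P₁ * normZ ϱ₂ P₂ := by
  simp only [normZ, re_trace_kronecker_mul (hP₁ _) (hϱ₁ _)]
  exact sum_sum_mul_sum_sum (fun s a => (P₁ a * ϱ₁ s).trace.re)
    (fun s a => (P₂ a * ϱ₂ s).trace.re)

lemma score_kronecker (hϱ₁ : ∀ s, (ϱ₁ s).PosSemidef) {P₁ : A₁ → Matrix n₁ n₁ ℂ}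
    (hP₁ : ∀ a, (P₁ a).PosSemidef) (P₂ : A₂ → Matrix n₂ n₂ ℂ) :
    score (fun s : S₁ × S₂ => ϱ₁ s.1 ⊗ₖ ϱ₂ s.2)
        (fun s (a : A₁ × A₂) => σ₁ s.1 a.1 * σ₂ s.2 a.2) (fun a : A₁ × A₂ => P₁ a.1 ⊗ₖ P₂ a.2) =
      score ϱ₁ σ₁ P₁ * score ϱ₂ σ₂ P₂ := by
  simp only [score, re_trace_kronecker_mul (hP₁ _) (hϱ₁ _)]
  rw [← sum_sum_mul_sum_sum (α := ℝ)]
  exact Finset.sum_congr rfl fun _ _ => Finset.sum_congr rfl fun _ _ => by ring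

lemma val_kronecker (hϱ₁ : ∀ s, (ϱ₁ s).PosSemidef) {P₁ : A₁ → Matrix n₁ n₁ ℂ}
    (hP₁ : ∀ a, (P₁ a).PosSemidef) (P₂ : A₂ → Matrix n₂ n₂ ℂ) :
    val (fun s : S₁ × S₂ => ϱ₁ s.1 ⊗ₖ ϱ₂ s.2)
        (fun s (a : A₁ × A₂) => σ₁ s.1 a.1 * σ₂ s.2 a.2) (fun a : A₁ × A₂ => P₁ a.1 ⊗ₖ P₂ a.2) =
      val ϱ₁ σ₁ P₁ * val ϱ₂ σ₂ P₂ := by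
  rw [val_eq_score_div, val_eq_score_div, val_eq_score_div, score_kronecker hϱ₁ hP₁,
    normZ_kronecker hϱ₁ hP₁, div_mul_div_comm]

variable (hσ₁ : ∀ s a, 0 ≤ σ₁ s a) (hσ₂ : ∀ s a, 0 ≤ σ₂ s a)
  (hϱ₁ : ∀ s, (ϱ₁ s).PosSemidef) (hϱ₂ : ∀ s, (ϱ₂ s).PosSemidef)
include hσ₁ hσ₂ hϱ₁ hϱ₂

lemma sel_kronecker_le :
    sel (fun s : S₁ × S₂ => ϱ₁ s.1 ⊗ₖ ϱ₂ s.2)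
        (fun s (a : A₁ × A₂) => σ₁ s.1 a.1 * σ₂ s.2 a.2) ≤ sel ϱ₁ σ₁ * sel ϱ₂ σ₂ := by
  refine sel_le_of_forall_sum_smul_le (mul_nonneg (sel_nonneg hσ₁ hϱ₁) (sel_nonneg hσ₂ hϱ₂))
    fun a => ?_
  rw [sum_smul_kronecker_sum_smul ϱ₁ ϱ₂ (σ₁ · a.1) (σ₂ · a.2), ← sum_kronecker_sum, mul_smul,
    ← kronecker_smul, ← smul_kronecker]
  exact kronecker_le_kronecker (posSemidef_sum _ fun s _ => (hϱ₁ s).smul (hσ₁ s a.1)).nonneg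
    (sum_smul_le_sel_smul hσ₁ hϱ₁ a.1)
    (posSemidef_sum _ fun s _ => (hϱ₂ s).smul (hσ₂ s a.2)).nonneg
    (sum_smul_le_sel_smul hσ₂ hϱ₂ a.2)

lemma phys_mul_phys_le_phys_kronecker [DecidableEq n₁] [DecidableEq n₂] :
    phys ϱ₁ σ₁ * phys ϱ₂ σ₂ ≤
      phys (fun s : S₁ × S₂ => ϱ₁ s.1 ⊗ₖ ϱ₂ s.2)
        (fun s (a : A₁ × A₂) => σ₁ s.1 a.1 * σ₂ s.2 a.2) := by
  have hσ (s : S₁ × S₂) (a : A₁ × A₂) : 0 ≤ σ₁ s.1 a.1 * σ₂ s.2 a.2 :=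
    mul_nonneg (hσ₁ s.1 a.1) (hσ₂ s.2 a.2)
  have hϱ (s : S₁ × S₂) : (ϱ₁ s.1 ⊗ₖ ϱ₂ s.2).PosSemidef := (hϱ₁ s.1).kronecker (hϱ₂ s.2)
  refine Real.sSup_mul_sSup_le ?_ ?_ (phys_nonneg hσ hϱ) ?_
  · rintro _ ⟨P, hP, -, rfl⟩
    exact val_nonneg hσ₁ hϱ₁ hP
  · rintro _ ⟨P, hP, -, rfl⟩
    exact val_nonneg hσ₂ hϱ₂ hP
  rintro _ ⟨P₁, hP₁, hP₁_sum, rfl⟩ _ ⟨P₂, hP₂, hP₂_sum, rfl⟩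
  rw [← val_kronecker hϱ₁ hP₁]
  refine val_le_phys hσ hϱ (fun a => (hP₁ a.1).kronecker (hP₂ a.2)) ?_
  rw [← sum_kronecker_sum, hP₁_sum, hP₂_sum, one_kronecker_one]

end Kronecker

end QRG

theorem phys_tensor_product_general {d₁ d₂ : ℕ} {S₁ S₂ A₁ A₂ : Type}
    [Fintype S₁] [Fintype S₂] [Fintype A₁] [Fintype A₂]
    (ϱ₁ : S₁ → Matrix (Fin d₁) (Fin d₁) ℂ) (σ₁ : S₁ → A₁ → ℝ)
    (ϱ₂ : S₂ → Matrix (Fin d₂) (Fin d₂) ℂ) (σ₂ : S₂ → A₂ → ℝ)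
    (hσ₁ : ∀ s a, 0 ≤ σ₁ s a) (hσ₂ : ∀ s a, 0 ≤ σ₂ s a)
    (hpsd₁ : ∀ s, (ϱ₁ s).PosSemidef) (hpsd₂ : ∀ s, (ϱ₂ s).PosSemidef)
    (h₁ : phys ϱ₁ σ₁ = sel ϱ₁ σ₁) (h₂ : phys ϱ₂ σ₂ = sel ϱ₂ σ₂) :
    phys (fun s : S₁ × S₂ => ϱ₁ s.1 ⊗ₖ ϱ₂ s.2)
        (fun s (a : A₁ × A₂) => σ₁ s.1 a.1 * σ₂ s.2 a.2) =
      sel (fun s : S₁ × S₂ => ϱ₁ s.1 ⊗ₖ ϱ₂ s.2)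
        (fun s (a : A₁ × A₂) => σ₁ s.1 a.1 * σ₂ s.2 a.2) := by
  have hσ (s : S₁ × S₂) (a : A₁ × A₂) : 0 ≤ σ₁ s.1 a.1 * σ₂ s.2 a.2 :=
    mul_nonneg (hσ₁ s.1 a.1) (hσ₂ s.2 a.2)
  have hϱ (s : S₁ × S₂) : (ϱ₁ s.1 ⊗ₖ ϱ₂ s.2).PosSemidef := (hpsd₁ s.1).kronecker (hpsd₂ s.2)
  refine le_antisymm (phys_le_sel hσ hϱ) ?_
  calc _ ≤ sel ϱ₁ σ₁ * sel ϱ₂ σ₂ := sel_kronecker_le hσ₁ hσ₂ hpsd₁ hpsd₂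
    _ = phys ϱ₁ σ₁ * phys ϱ₂ σ₂ := by rw [h₁, h₂]
    _ ≤ _ := phys_mul_phys_le_phys_kronecker hσ₁ hσ₂ hpsd₁ hpsd₂

/-- Tensor product physical value: if the physical and selective values coincide for
two weighted quantum retrieval games, they also coincide for their tensor product. -/
theorem phys_tensor_product {d₁ d₂ : ℕ} {S₁ S₂ A₁ A₂ : Type}
    [Fintype S₁] [Fintype S₂] [Fintype A₁] [Fintype A₂]
    [Nonempty S₁] [Nonempty S₂] [Nonempty A₁] [Nonempty A₂]
    (ϱ₁ : S₁ → Matrix (Fin d₁) (Fin d₁) ℂ) (σ₁ : S₁ → A₁ → ℝ)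
    (ϱ₂ : S₂ → Matrix (Fin d₂) (Fin d₂) ℂ) (σ₂ : S₂ → A₂ → ℝ)
    (hσ₁ : ∀ s a, 0 ≤ σ₁ s a) (hσ₂ : ∀ s a, 0 ≤ σ₂ s a)
    (hpsd₁ : ∀ s, (ϱ₁ s).PosSemidef) (hpsd₂ : ∀ s, (ϱ₂ s).PosSemidef)
    (htr₁ : ∑ s, (ϱ₁ s).trace = 1) (htr₂ : ∑ s, (ϱ₂ s).trace = 1)
    (hpd₁ : (∑ s, ϱ₁ s).PosDef) (hpd₂ : (∑ s, ϱ₂ s).PosDef)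
    (h₁ : phys ϱ₁ σ₁ = sel ϱ₁ σ₁) (h₂ : phys ϱ₂ σ₂ = sel ϱ₂ σ₂) :
    phys (fun s : S₁ × S₂ => ϱ₁ s.1 ⊗ₖ ϱ₂ s.2)
        (fun s (a : A₁ × A₂) => σ₁ s.1 a.1 * σ₂ s.2 a.2) =
      sel (fun s : S₁ × S₂ => ϱ₁ s.1 ⊗ₖ ϱ₂ s.2)
        (fun s (a : A₁ × A₂) => σ₁ s.1 a.1 * σ₂ s.2 a.2) :=
  phys_tensor_product_general ϱ₁ σ₁ ϱ₂ σ₂ hσ₁ hσ₂ hpsd₁ hpsd₂ h₁ h₂
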